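/- A positive integer m^opt maximizes P_B(m,η) = (1 - 2^{-m})·η^{2m} over m ≥ 1 if it satisfies f(m^opt - 1) ≤ η² < f(m^opt), where f(0)=0 and f(m) = (1 - 2^{-m})/(1 - 2^{-(m+1)}) for m ≥ 1. -/

import Mathlib

/-- Boosted type II fusion gate success probability. -/
noncomputable def P_B (m : ℕ) (η : ℝ) : ℝ := (1 - (1/2 : ℝ)^m) * η^(2*m)

/-- Improvement factor from adding one more fused pair. -/
noncomputable def f (m : ℕ) : ℝ :=
  if m = 0 then 0 else (1 - (1/2 : ℝ)^m) / (1 - (1/2 : ℝ)^(m+1))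

/-!
For every `m`, including `m = 0`,
`P_B (m+1) η - P_B m η = η^(2m) (1 - 2^{-(m+1)}) (η² - f m)`,
so `P_B · η` increases from `m` to `m + 1` exactly when `f m ≤ η²`. Since `f` is monotone, the
hypotheses make `P_B · η` increase up to `mopt` and decrease after it.
-/

theorem le_of_le_succ_of_succ_le {α : Type*} [Preorder α] {u : ℕ → α} {N : ℕ}
    (hup : ∀ n < N, u n ≤ u (n + 1)) (hdown : ∀ n ≥ N, u (n + 1) ≤ u n) (m : ℕ) :
    u m ≤ u N := by
  rcases le_total m N with hmN | hNm
  · have key : ∀ n, m ≤ n → n ≤ N → u m ≤ u n := by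
      intro n hmn
      induction n, hmn using Nat.le_induction with
      | base => exact fun _ ↦ le_rfl
      | succ n _ ih => exact fun hn ↦ (ih (Nat.le_of_succ_le hn)).trans (hup n hn)
    exact key N hmN le_rfl
  · exact antitoneOn_nat_Ici_of_succ_le hdown (le_refl N) hNm hNm

theorem half_pow_le_one (m : ℕ) : (1/2 : ℝ)^m ≤ 1 :=
  pow_le_one₀ (by norm_num) (by norm_num)

/-- The closed form also covers `m = 0`, which removes the case split in the definition of `f`. -/
theorem f_eq_two_sub (m : ℕ) : f m = 2 - 2 / (2 - (1/2 : ℝ)^m) := by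
  have hpos : (0 : ℝ) < 2 - (1/2)^m := by linarith [half_pow_le_one m]
  unfold f
  split_ifs with hm
  · norm_num [hm]
  · rw [show (1 : ℝ) - (1/2)^(m+1) = (2 - (1/2)^m) / 2 by ring]
    field_simp
    ring

theorem f_monotone : Monotone f := by
  intro m n hmn
  simp only [f_eq_two_sub]
  have hn : (1/2 : ℝ)^n ≤ (1/2)^m := pow_le_pow_of_le_one (by norm_num) (by norm_num) hmn
  gcongr
  linarith [half_pow_le_one m]

theorem f_mul_one_sub_half_pow_succ (m : ℕ) :
    f m * (1 - (1/2 : ℝ)^(m+1)) = 1 - (1/2)^m := by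
  have hne : (2 : ℝ) - (1/2)^m ≠ 0 := by linarith [half_pow_le_one m]
  rw [f_eq_two_sub, pow_succ]
  field_simp
  ring

theorem P_B_succ_sub (m : ℕ) (η : ℝ) :
    P_B (m + 1) η - P_B m η = η^(2*m) * (1 - (1/2 : ℝ)^(m+1)) * (η^2 - f m) := by
  unfold P_B
  linear_combination η^(2*m) * f_mul_one_sub_half_pow_succ m

theorem succ_weight_nonneg (m : ℕ) (η : ℝ) : 0 ≤ η^(2*m) * (1 - (1/2 : ℝ)^(m+1)) := by
  have hη : 0 ≤ η^(2*m) := by rw [pow_mul]; exact pow_nonneg (sq_nonneg η) m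
  exact mul_nonneg hη (sub_nonneg.2 (half_pow_le_one (m + 1)))

theorem P_B_le_succ {m : ℕ} {η : ℝ} (h : f m ≤ η^2) : P_B m η ≤ P_B (m + 1) η :=
  sub_nonneg.1 <| P_B_succ_sub m η ▸ mul_nonneg (succ_weight_nonneg m η) (sub_nonneg.2 h)

theorem P_B_succ_le {m : ℕ} {η : ℝ} (h : η^2 ≤ f m) : P_B (m + 1) η ≤ P_B m η :=
  sub_nonpos.1 <| P_B_succ_sub m η ▸
    mul_nonpos_of_nonneg_of_nonpos (succ_weight_nonneg m η) (sub_nonpos.2 h)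

theorem boosted_fusion_optimal_m_general (η : ℝ)
    (mopt : ℕ)
    (hlow : f (mopt - 1) ≤ η^2) (hhigh : η^2 < f mopt) :
    ∀ m : ℕ, 1 ≤ m → P_B m η ≤ P_B mopt η := by
  intro m _
  refine le_of_le_succ_of_succ_le (u := (P_B · η))
    (fun n hn ↦ P_B_le_succ ?_) (fun n hn ↦ P_B_succ_le ?_) m
  · exact (f_monotone (Nat.le_sub_one_of_lt hn)).trans hlow
  · exact hhigh.le.trans (f_monotone hn)

theorem boosted_fusion_optimal_m (η : ℝ) (hη0 : 0 < η) (hη1 : η ≤ 1)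
    (mopt : ℕ) (hmopt : 1 ≤ mopt)
    (hlow : f (mopt - 1) ≤ η^2) (hhigh : η^2 < f mopt) :
    ∀ m : ℕ, 1 ≤ m → P_B m η ≤ P_B mopt η :=
  boosted_fusion_optimal_m_general η mopt hlow hhigh
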